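/- Assume ψ contains an intercept, positivity holds (the density ratio Λ(x) = f_rct(x)/f_obs(x) is well-defined and P_obs-a.s. positive), no nontrivial linear combination cᵀψ(Δ(X)) vanishes P_rct-almost surely, and the Gram matrix E_rct[ψ(Δ(X))ψ(Δ(X))ᵀ] is invertible. Then there exists a measurable weight function w with E_obs[w(X)] = 1 such that τ̄ = E_obs[w(X)μ(X)], where τ̄ = E_obs[μ̄(X)] and μ̄ is the L²(P_rct)-projection of μ onto the span of ψ∘Δ. -/

import Mathlib

open MeasureTheory
open scoped ENNReal

lemma wd_integral {X : Type*} [MeasurableSpace X] (lam : Measure X) (f : X → ℝ)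
    (hf : Measurable f) (hf0 : ∀ x, 0 ≤ f x) (g : X → ℝ) :
    ∫ x, g x ∂(lam.withDensity fun x => ENNReal.ofReal (f x)) = ∫ x, f x * g x ∂lam := by
  rw [show (fun x => ENNReal.ofReal (f x)) = fun x => ((f x).toNNReal : ℝ≥0∞) from rfl,
    integral_withDensity_eq_integral_smul hf.real_toNNReal]
  congr 1; funext x
  simp [NNReal.smul_def, Real.coe_toNNReal _ (hf0 x)]

lemma wd_integrable {X : Type*} [MeasurableSpace X] (lam : Measure X) (f : X → ℝ)
    (hf : Measurable f) (hf0 : ∀ x, 0 ≤ f x) (g : X → ℝ) :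
    Integrable g (lam.withDensity fun x => ENNReal.ofReal (f x)) ↔
      Integrable (fun x => f x * g x) lam := by
  rw [show (fun x => ENNReal.ofReal (f x)) = fun x => ((f x).toNNReal : ℝ≥0∞) from rfl,
    integrable_withDensity_iff_integrable_smul hf.real_toNNReal]
  exact integrable_congr (Filter.EventuallyEq.of_eq (funext fun x => by
    simp [NNReal.smul_def, Real.coe_toNNReal _ (hf0 x)]))

lemma myIntegrableMul {X : Type*} [MeasurableSpace X] {ν : Measure X} {f g : X → ℝ}
    (hf : MemLp f 2 ν) (hg : MemLp g 2 ν) : Integrable (fun x => f x * g x) ν := by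
  have h := hg.smul hf (r := 1)
  rw [memLp_one_iff_integrable] at h
  exact h.congr (Filter.EventuallyEq.of_eq (funext fun x => by simp [smul_eq_mul]))

lemma integral_expand {X : Type*} [MeasurableSpace X] {ν : Measure X} {f g h : X → ℝ} {a c : ℝ}
    (hf : Integrable f ν) (hg : Integrable g ν) (hh : Integrable h ν) :
    ∫ x, (f x - a * g x + c * h x) ∂ν
      = (∫ x, f x ∂ν) - a * (∫ x, g x ∂ν) + c * (∫ x, h x ∂ν) := by
  have h1 : Integrable (fun x => a * g x) ν := hg.const_mul a
  have h2 : Integrable (fun x => f x - a * g x) ν := hf.sub h1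
  have h3 : Integrable (fun x => c * h x) ν := hh.const_mul c
  rw [integral_add h2 h3, integral_sub hf h1, integral_const_mul, integral_const_mul]

lemma transfer_pair {X : Type*} [MeasurableSpace X] (lam : Measure X) (frct fobs : X → ℝ)
    (hfrct : Measurable frct) (hfobs : Measurable fobs)
    (hfrct0 : ∀ x, 0 ≤ frct x) (hfobs0 : ∀ x, 0 ≤ fobs x)
    (hdom : ∀ᵐ x ∂lam, fobs x = 0 → frct x = 0)
    (g : X → ℝ)
    (hgint : Integrable g (lam.withDensity fun x => ENNReal.ofReal (frct x))) :
    Integrable (fun x => (frct x / fobs x) * g x)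
      (lam.withDensity fun x => ENNReal.ofReal (fobs x)) ∧
    ∫ x, (frct x / fobs x) * g x ∂(lam.withDensity fun x => ENNReal.ofReal (fobs x)) =
      ∫ x, g x ∂(lam.withDensity fun x => ENNReal.ofReal (frct x)) := by
  have haeq : (fun x => fobs x * (frct x / fobs x * g x)) =ᵐ[lam] fun x => frct x * g x := by
    filter_upwards [hdom] with x hx
    by_cases h : fobs x = 0
    · simp [h, hx h]
    · field_simp
  constructor
  · rw [wd_integrable lam fobs hfobs hfobs0]
    exact ((wd_integrable lam frct hfrct hfrct0 g).mp hgint).congr haeq.symm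
  · rw [wd_integral lam fobs hfobs hfobs0, wd_integral lam frct hfrct hfrct0,
      integral_congr_ae haeq]

/-- Proposition 1 (weighted ATE representation): under positivity, an intercept,
linear independence and an invertible Gram matrix, the projected estimand
τ̄ = E_obs[μ̄(X)] is a weighted average of the CATE with weights averaging to one. -/
theorem stmt_3 {X : Type*} [MeasurableSpace X]
    (lam : Measure X) [SigmaFinite lam]
    (frct fobs : X → ℝ) (hfrct : Measurable frct) (hfobs : Measurable fobs)
    (hfrct0 : ∀ x, 0 ≤ frct x) (hfobs0 : ∀ x, 0 ≤ fobs x)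
    (Prct Pobs : Measure X)
    (hPrct : Prct = lam.withDensity fun x => ENNReal.ofReal (frct x))
    (hPobs : Pobs = lam.withDensity fun x => ENNReal.ofReal (fobs x))
    [IsProbabilityMeasure Prct] [IsProbabilityMeasure Pobs]
    -- f_obs dominates f_rct
    (hdom : ∀ᵐ x ∂lam, fobs x = 0 → frct x = 0)
    {p : ℕ} (μ Δ : X → ℝ) (ψ : ℝ → Fin p → ℝ)
    (hμ : Measurable μ) (hΔ : Measurable Δ) (hψ : ∀ i, Measurable fun z => ψ z i)
    (Λ : X → ℝ) (hΛ : ∀ x, Λ x = frct x / fobs x)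
    -- positivity: the density ratio is well-defined and P_obs-a.s. positive
    (hpos : ∀ᵐ x ∂Pobs, 0 < fobs x ∧ 0 < frct x)
    -- intercept
    (i₀ : Fin p) (hintercept : ∀ z, ψ z i₀ = 1)
    -- no nontrivial linear combination of ψ(Δ(X)) vanishes P_rct-a.s.
    (hindep : ∀ c : Fin p → ℝ, c ≠ 0 → ¬ (∀ᵐ x ∂Prct, ∑ j, c j * ψ (Δ x) j = 0))
    -- invertible Gram matrix
    (G : Matrix (Fin p) (Fin p) ℝ)
    (hG : ∀ i j, G i j = ∫ x, ψ (Δ x) i * ψ (Δ x) j ∂Prct)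
    (hGinv : IsUnit G)
    -- the projection μ̄
    (betaBar : Fin p → ℝ)
    (muBar : X → ℝ) (hmuBar : ∀ x, muBar x = ∑ j, betaBar j * ψ (Δ x) j)
    (hmin : ∀ β : Fin p → ℝ,
      ∫ x, (μ x - muBar x) ^ 2 ∂Prct ≤
        ∫ x, (μ x - ∑ j, β j * ψ (Δ x) j) ^ 2 ∂Prct)
    -- moment conditions
    (hμ2rct : MemLp μ 2 Prct) (hψ2rct : ∀ i, MemLp (fun x => ψ (Δ x) i) 2 Prct)
    (hμobs : Integrable μ Pobs) (hmuBarobs : Integrable muBar Pobs)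
    (hbint : ∀ i, Integrable (fun x => Λ x * μ x * (μ x - muBar x) * ψ (Δ x) i) Pobs)
    (hwint : ∀ γ : Fin p → ℝ,
      Integrable (fun x => Λ x * (μ x - muBar x) * (∑ j, γ j * ψ (Δ x) j) * μ x) Pobs) :
    ∃ w : X → ℝ, Measurable w ∧ Integrable w Pobs ∧ (∫ x, w x ∂Pobs) = 1 ∧
      ∫ x, muBar x ∂Pobs = ∫ x, w x * μ x ∂Pobs := by
  have hΛf : Λ = fun x => frct x / fobs x := funext hΛ
  have hψΔ : ∀ j, Measurable fun x => ψ (Δ x) j := fun j => (hψ j).comp hΔ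
  have hmuBarf : muBar = fun x => ∑ j, betaBar j * ψ (Δ x) j := funext hmuBar
  have hmuBarMeas : Measurable muBar := by
    rw [hmuBarf]
    exact Finset.measurable_sum _ fun j _ => measurable_const.mul (hψΔ j)
  have hmuBar2 : MemLp muBar 2 Prct := by
    rw [hmuBarf]
    exact memLp_finset_sum _ fun j _ => (hψ2rct j).const_mul (betaBar j)
  have hone : (1:ℝ≥0∞) ≤ 2 := one_le_two
  have hμint : Integrable μ Prct := hμ2rct.integrable hone
  have hmuBarint : Integrable muBar Prct := hmuBar2.integrable hone
  have hr2 : MemLp (fun x => μ x - muBar x) 2 Prct := hμ2rct.sub hmuBar2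
  have hrψ : ∀ j, Integrable (fun x => (μ x - muBar x) * ψ (Δ x) j) Prct :=
    fun j => myIntegrableMul hr2 (hψ2rct j)
  have hψψ : ∀ j, Integrable (fun x => ψ (Δ x) j ^ 2) Prct := fun j => (hψ2rct j).integrable_sq
  have hr2int : Integrable (fun x => (μ x - muBar x) ^ 2) Prct := hr2.integrable_sq
  -- orthogonality of the residual to each basis function
  have horth : ∀ j, ∫ x, (μ x - muBar x) * ψ (Δ x) j ∂Prct = 0 := by
    intro j
    set B := ∫ x, (μ x - muBar x) * ψ (Δ x) j ∂Prct with hBdef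
    set C := ∫ x, ψ (Δ x) j ^ 2 ∂Prct with hCdef
    have hC0 : 0 ≤ C := integral_nonneg fun x => sq_nonneg _
    have key : ∀ t : ℝ, 0 ≤ -(2*t*B) + t^2*C := by
      intro t
      have h := hmin fun k => betaBar k + t * (if k = j then 1 else 0)
      have hsum : ∀ x, (∑ k, (betaBar k + t * (if k = j then (1:ℝ) else 0)) * ψ (Δ x) k)
          = muBar x + t * ψ (Δ x) j := by
        intro x
        have e : ∀ k : Fin p, (betaBar k + t * (if k = j then (1:ℝ) else 0)) * ψ (Δ x) k
            = betaBar k * ψ (Δ x) k + (if k = j then t * ψ (Δ x) k else 0) := by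
          intro k; by_cases hk : k = j <;> simp [hk] <;> ring
        rw [Finset.sum_congr rfl fun k _ => e k, Finset.sum_add_distrib, hmuBar x]
        simp
      simp only [hsum] at h
      have h2 : ∫ x, (μ x - (muBar x + t * ψ (Δ x) j))^2 ∂Prct
          = (∫ x, (μ x - muBar x)^2 ∂Prct) - (2*t)*B + t^2*C := by
        have e2 : (fun x => (μ x - (muBar x + t * ψ (Δ x) j))^2)
            = fun x => ((μ x - muBar x)^2 - (2*t)*((μ x - muBar x) * ψ (Δ x) j))
                + t^2 * ψ (Δ x) j^2 := by
          funext x; ring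
        rw [show (∫ x, (μ x - (muBar x + t * ψ (Δ x) j))^2 ∂Prct)
            = ∫ x, ((μ x - muBar x)^2 - (2*t)*((μ x - muBar x) * ψ (Δ x) j)
                + t^2 * ψ (Δ x) j^2) ∂Prct from
          integral_congr_ae (Filter.Eventually.of_forall fun x => by ring)]
        rw [integral_expand hr2int (hrψ j) (hψψ j)]
      rw [h2] at h
      linarith
    have hB2 : B^2 ≤ 0 := by
      have hC1 : (0:ℝ) < C + 1 := by linarith
      have h1 := key (B/(C+1))
      have h2 : 0 ≤ (-(2*(B/(C+1))*B) + (B/(C+1))^2*C) * (C+1)^2 :=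
        mul_nonneg h1 (sq_nonneg _)
      have h3 : (-(2*(B/(C+1))*B) + (B/(C+1))^2*C) * (C+1)^2 = -(B^2*(C+2)) := by
        field_simp
        ring
      nlinarith [sq_nonneg B]
    have hB0 : B^2 = 0 := le_antisymm hB2 (sq_nonneg B)
    exact (pow_eq_zero_iff two_ne_zero).mp hB0
  have hrint0 : ∫ x, (μ x - muBar x) ∂Prct = 0 := by
    have h := horth i₀
    simpa [hintercept] using h
  have hμeq : ∫ x, μ x ∂Prct = ∫ x, muBar x ∂Prct := by
    have h := integral_sub hμint hmuBarint
    rw [hrint0] at h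
    linarith
  have hrmuBar : ∫ x, (μ x - muBar x) * muBar x ∂Prct = 0 := by
    have hterm : ∀ x, (μ x - muBar x) * muBar x
        = ∑ k, betaBar k * ((μ x - muBar x) * ψ (Δ x) k) := by
      intro x
      rw [hmuBar x, Finset.mul_sum]
      exact Finset.sum_congr rfl fun k _ => by ring
    rw [show (∫ x, (μ x - muBar x) * muBar x ∂Prct)
        = ∫ x, ∑ k, betaBar k * ((μ x - muBar x) * ψ (Δ x) k) ∂Prct from by
      congr 1; funext x; exact hterm x]
    rw [integral_finset_sum _ fun k _ => (hrψ k).const_mul _]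
    simp [integral_const_mul, horth]
  have hmix : ∫ x, muBar x * μ x ∂Prct = ∫ x, muBar x * muBar x ∂Prct := by
    have e : (fun x => (μ x - muBar x) * muBar x)
        = fun x => μ x * muBar x - muBar x * muBar x := by funext x; ring
    rw [e] at hrmuBar
    rw [integral_sub (myIntegrableMul hμ2rct hmuBar2) (myIntegrableMul hmuBar2 hmuBar2)]
      at hrmuBar
    have e2 : (fun x => muBar x * μ x) = fun x => μ x * muBar x := by funext x; ring
    rw [e2]
    linarith
  set m := ∫ x, muBar x ∂Prct with hm
  have hμm : ∫ x, μ x ∂Prct = m := hμeq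
  set V := ∫ x, (muBar x - m)^2 ∂Prct with hVdef
  have hVint : Integrable (fun x => (muBar x - m)^2) Prct :=
    (hmuBar2.sub (memLp_const m)).integrable_sq
  have hV0le : 0 ≤ V := integral_nonneg fun x => sq_nonneg _
  have hVval : V = (∫ x, muBar x * muBar x ∂Prct) - m*m := by
    rw [hVdef, show (∫ x, (muBar x - m)^2 ∂Prct)
        = ∫ x, (muBar x * muBar x - (2*m) * muBar x + (m^2) * (fun _ => (1:ℝ)) x) ∂Prct from
      integral_congr_ae (Filter.Eventually.of_forall fun x => by simp; ring)]
    rw [integral_expand (myIntegrableMul hmuBar2 hmuBar2) hmuBarint (integrable_const 1)]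
    simp [← hm]
    ring
  by_cases hVzero : V = 0
  · -- degenerate case: muBar is constant, take w = Λ
    have hae : (fun x => (muBar x - m)^2) =ᵐ[Prct] 0 := by
      have h := (integral_eq_zero_iff_of_nonneg (fun x => sq_nonneg _) hVint).mp
        (by rw [← hVdef]; exact hVzero)
      exact h
    have hae2 : ∀ᵐ x ∂Prct, muBar x = m := by
      filter_upwards [hae] with x hx
      have hx' : (muBar x - m)^2 = 0 := hx
      have := (pow_eq_zero_iff two_ne_zero).mp hx'
      linarith
    set c : Fin p → ℝ := fun k => betaBar k - (if k = i₀ then m else 0) with hc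
    have hcsum : ∀ᵐ x ∂Prct, ∑ j, c j * ψ (Δ x) j = 0 := by
      filter_upwards [hae2] with x hx
      have hs : ∑ j, c j * ψ (Δ x) j = muBar x - m := by
        have e : ∀ k : Fin p, c k * ψ (Δ x) k
            = betaBar k * ψ (Δ x) k - (if k = i₀ then m * ψ (Δ x) k else 0) := by
          intro k; by_cases hk : k = i₀ <;> simp [hc, hk] <;> ring
        rw [Finset.sum_congr rfl fun k _ => e k, Finset.sum_sub_distrib, hmuBar x]
        simp [hintercept]
      rw [hs, hx, sub_self]
    have hczero : c = 0 := by
      by_contra hne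
      exact hindep c hne hcsum
    have hmuBarconst : ∀ x, muBar x = m := by
      intro x
      have hbk : ∀ k, betaBar k = if k = i₀ then m else 0 := by
        intro k
        have h := congrFun hczero k
        simp only [hc, Pi.zero_apply, sub_eq_zero] at h
        exact h
      rw [hmuBar x]
      rw [Finset.sum_congr rfl fun k _ => by rw [hbk k]]
      simp [hintercept]
    have hτ : ∫ x, muBar x ∂Pobs = m := by
      rw [show muBar = fun _ => m from funext hmuBarconst]
      simp
    have hpair := transfer_pair lam frct fobs hfrct hfobs hfrct0 hfobs0 hdom μ
      (hPrct ▸ hμint)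
    have hpair1 := transfer_pair lam frct fobs hfrct hfobs hfrct0 hfobs0 hdom
      (fun _ => (1:ℝ)) (hPrct ▸ (integrable_const (1:ℝ)))
    refine ⟨Λ, by rw [hΛf]; exact hfrct.div hfobs, ?_, ?_, ?_⟩
    · rw [hPobs, hΛf]
      simpa using hpair1.1
    · rw [hPobs, hΛf]
      have h1 : ∫ x, (1:ℝ) ∂(lam.withDensity fun x => ENNReal.ofReal (frct x)) = 1 := by
        rw [← hPrct]; simp
      calc ∫ x, frct x / fobs x ∂(lam.withDensity fun x => ENNReal.ofReal (fobs x))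
          = ∫ x, (frct x / fobs x) * 1 ∂(lam.withDensity fun x => ENNReal.ofReal (fobs x)) := by
            simp
        _ = 1 := by rw [hpair1.2, h1]
    · rw [hτ, hPobs, hΛf]
      have h2 : ∫ x, μ x ∂(lam.withDensity fun x => ENNReal.ofReal (frct x)) = m := by
        rw [← hPrct]; exact hμm
      rw [show (∫ x, (fun x => frct x / fobs x) x * μ x
          ∂(lam.withDensity fun x => ENNReal.ofReal (fobs x)))
          = ∫ x, (frct x / fobs x) * μ x
          ∂(lam.withDensity fun x => ENNReal.ofReal (fobs x)) from rfl]
      rw [hpair.2, h2]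
  · -- nondegenerate case
    have hVpos : 0 < V := lt_of_le_of_ne hV0le (Ne.symm hVzero)
    set τ := ∫ x, muBar x ∂Pobs with hτdef
    set b := (τ - m)/V with hbdef
    set g : X → ℝ := fun x => 1 + b * (muBar x - m) with hgdef
    have hgm : Measurable g := measurable_const.add ((hmuBarMeas.sub measurable_const).const_mul b)
    have hgint : Integrable g Prct :=
      (integrable_const 1).add ((hmuBarint.sub (integrable_const m)).const_mul b)
    have hgL2 : MemLp g 2 Prct :=
      (memLp_const (1:ℝ)).add ((hmuBar2.sub (memLp_const m)).const_mul b)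
    have hgμint : Integrable (fun x => g x * μ x) Prct := myIntegrableMul hgL2 hμ2rct
    have h1 := transfer_pair lam frct fobs hfrct hfobs hfrct0 hfobs0 hdom g (hPrct ▸ hgint)
    have h2 := transfer_pair lam frct fobs hfrct hfobs hfrct0 hfobs0 hdom
      (fun x => g x * μ x) (hPrct ▸ hgμint)
    have hgPrct : ∫ x, g x ∂Prct = 1 := by
      rw [show (∫ x, g x ∂Prct)
          = ∫ x, ((fun _ => (1:ℝ)) x - (-b) * (muBar x - m) + 0 * (fun _ => (1:ℝ)) x) ∂Prct from
        integral_congr_ae (Filter.Eventually.of_forall fun x => by simp only [hgdef]; ring)]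
      have hsubint : Integrable (fun x => muBar x - m) Prct :=
        hmuBarint.sub (integrable_const m)
      rw [integral_expand (integrable_const 1) hsubint (integrable_const 1)]
      rw [integral_sub hmuBarint (integrable_const m)]
      simp [← hm]
    have hgμPrct : ∫ x, g x * μ x ∂Prct = τ := by
      have e : (fun x => g x * μ x)
          = fun x => μ x + b * (muBar x * μ x - m * μ x) := by
        funext x; simp only [hgdef]; ring
      rw [show (∫ x, g x * μ x ∂Prct)
          = ∫ x, (μ x - (-b) * (muBar x * μ x - m * μ x) + 0 * μ x) ∂Prct from by
        rw [e]; exact integral_congr_ae (Filter.Eventually.of_forall fun x => by ring)]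
      have hsubint2 : Integrable (fun x => muBar x * μ x - m * μ x) Prct :=
        (myIntegrableMul hmuBar2 hμ2rct).sub (hμint.const_mul m)
      rw [integral_expand hμint hsubint2 hμint]
      rw [integral_sub (myIntegrableMul hmuBar2 hμ2rct) (hμint.const_mul m),
        integral_const_mul, hmix, hμm]
      rw [← hVval, hbdef]
      field_simp
      ring
    refine ⟨fun x => Λ x * g x,
      (show Measurable Λ from by rw [hΛf]; exact hfrct.div hfobs).mul hgm, ?_, ?_, ?_⟩
    · rw [hPobs]
      simp only [hΛf]
      exact h1.1
    · rw [hPobs]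
      simp only [hΛf]
      rw [h1.2, ← hPrct, hgPrct]
    · rw [hPobs]
      simp only [hΛf]
      have e3 : ∫ x, (frct x / fobs x) * g x * μ x
            ∂(lam.withDensity fun x => ENNReal.ofReal (fobs x))
          = ∫ x, (frct x / fobs x) * (g x * μ x)
            ∂(lam.withDensity fun x => ENNReal.ofReal (fobs x)) := by
        congr 1; funext x; ring
      rw [e3, h2.2, ← hPrct, hgμPrct]
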